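/- For all real x with 0 < x < π/2, 3 + (3/20)·x^3·tan x < 2·(sin x/x) + (tan x)/x < 3 + (2/π)^4·x^3·tan x. -/

import Mathlib

/-!
Since `x cos x > 0`, each inequality is a sign condition on
`D_c(x) = sin 2x + sin x - 3x cos x - c x⁴ sin x` (`huygensDefect c x`).
The alternating Taylor bounds for `sin` and `cos` on `[0, ∞)`, obtained by integrating
`cos ≤ 1` repeatedly, bound `D_{3/20}` below by a polynomial starting with `x⁷/280`, and, for
`x ≤ 7/5`, bound `D_c` (`c ≥ 13/80`) above by a polynomial starting with `-x⁵/80`.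
Since `D_{(2/π)⁴}(π/2) = 0`, Taylor polynomials cannot reach the endpoint; on `(7/5, π/2)` one
factors `1 - (2x/π)⁴ = (2/π)⁴ (π/2 - x)(π/2 + x)((π/2)² + x²)` and uses
`(π/2 - x) sin x < cos x`, i.e. `t < tan t` at `t = π/2 - x`.
-/

open Real
open scoped Nat

noncomputable def sinTaylor (n : ℕ) (x : ℝ) : ℝ :=
  ∑ k ∈ Finset.range n, (-1) ^ k * (x ^ (2 * k + 1) / (2 * k + 1)!)

noncomputable def cosTaylor (n : ℕ) (x : ℝ) : ℝ :=
  ∑ k ∈ Finset.range n, (-1) ^ k * (x ^ (2 * k) / (2 * k)!)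

lemma hasDerivAt_pow_succ_div_factorial (m : ℕ) (x : ℝ) :
    HasDerivAt (fun x : ℝ => x ^ (m + 1) / (m + 1)!) (x ^ m / m !) x := by
  refine ((hasDerivAt_pow (m + 1) x).div_const _).congr_deriv ?_
  rw [Nat.factorial_succ]
  push_cast
  field_simp

lemma hasDerivAt_sinTaylor (n : ℕ) (x : ℝ) : HasDerivAt (sinTaylor n) (cosTaylor n x) x := by
  unfold sinTaylor cosTaylor
  exact HasDerivAt.fun_sum fun k _ => (hasDerivAt_pow_succ_div_factorial (2 * k) x).const_mul _

lemma hasDerivAt_cosTaylor_succ (n : ℕ) (x : ℝ) :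
    HasDerivAt (cosTaylor (n + 1)) (-sinTaylor n x) x := by
  have hsplit : cosTaylor (n + 1) = fun x =>
      ∑ k ∈ Finset.range n, (-1 : ℝ) ^ (k + 1) * (x ^ (2 * k + 2) / (2 * k + 2)!) + 1 := by
    ext x
    simp [cosTaylor, Finset.sum_range_succ', mul_add]
  rw [hsplit, sinTaylor, ← Finset.sum_neg_distrib]
  refine (HasDerivAt.fun_sum fun k _ => ?_).add_const 1
  exact ((hasDerivAt_pow_succ_div_factorial (2 * k + 1) x).const_mul _).congr_deriv (by ring)

lemma apply_zero_le_of_hasDerivAt_nonneg {f f' : ℝ → ℝ} (hf : ∀ t, HasDerivAt f (f' t) t)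
    (hf' : ∀ t, 0 < t → 0 ≤ f' t) {x : ℝ} (hx : 0 ≤ x) : f 0 ≤ f x := by
  refine monotoneOn_of_hasDerivWithinAt_nonneg (convex_Ici 0)
    (fun t _ => (hf t).continuousAt.continuousWithinAt) (fun t _ => (hf t).hasDerivWithinAt)
    (fun t ht => hf' t ?_) Set.self_mem_Ici hx hx
  simpa using ht

lemma sinTaylor_alternating_of_cos {n : ℕ}
    (h : ∀ t, 0 ≤ t → 0 ≤ (-1) ^ n * (cosTaylor (n + 1) t - cos t)) {x : ℝ}
    (hx : 0 ≤ x) :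
    0 ≤ (-1) ^ n * (sinTaylor (n + 1) x - sin x) := by
  have hf (t : ℝ) :=
    ((hasDerivAt_sinTaylor (n + 1) t).sub (hasDerivAt_sin t)).const_mul ((-1 : ℝ) ^ n)
  simpa [sinTaylor] using apply_zero_le_of_hasDerivAt_nonneg hf (fun t ht => h t ht.le) hx

lemma cosTaylor_alternating_succ_of_sin {n : ℕ}
    (h : ∀ t, 0 ≤ t → 0 ≤ (-1) ^ n * (sinTaylor (n + 1) t - sin t)) {x : ℝ}
    (hx : 0 ≤ x) :
    0 ≤ (-1) ^ (n + 1) * (cosTaylor (n + 2) x - cos x) := by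
  have hf (t : ℝ) := ((hasDerivAt_cosTaylor_succ (n + 1) t).sub (hasDerivAt_cos t)).const_mul
    ((-1 : ℝ) ^ (n + 1))
  have := apply_zero_le_of_hasDerivAt_nonneg hf (fun t ht => ?_) hx
  · simpa [cosTaylor, Finset.sum_range_succ'] using this
  · convert h t ht.le using 1
    ring

theorem cosTaylor_alternating (n : ℕ) {x : ℝ} (hx : 0 ≤ x) :
    0 ≤ (-1) ^ n * (cosTaylor (n + 1) x - cos x) := by
  induction n generalizing x with
  | zero => simpa [cosTaylor] using cos_le_one x
  | succ n ih =>
    exact cosTaylor_alternating_succ_of_sin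
      (fun _ ht => sinTaylor_alternating_of_cos (fun _ hs => ih hs) ht) hx

theorem sinTaylor_alternating (n : ℕ) {x : ℝ} (hx : 0 ≤ x) :
    0 ≤ (-1) ^ n * (sinTaylor (n + 1) x - sin x) :=
  sinTaylor_alternating_of_cos (fun _ ht => cosTaylor_alternating n ht) hx

noncomputable def huygensDefect (c x : ℝ) : ℝ :=
  sin (2 * x) + sin x - 3 * x * cos x - c * x ^ 4 * sin x

lemma huygens_sub_eq_huygensDefect_div (c : ℝ) {x : ℝ} (hx : x ≠ 0) (hcos : cos x ≠ 0) :
    2 * (sin x / x) + tan x / x - (3 + c * x ^ 3 * tan x) = huygensDefect c x / (x * cos x) := by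
  rw [huygensDefect, tan_eq_sin_div_cos, sin_two_mul]
  field_simp
  ring

lemma huygensDefect_pos {x : ℝ} (hx0 : 0 < x) (hx : x ≤ 2) : 0 < huygensDefect (3 / 20) x := by
  have hsin2x := sinTaylor_alternating 5 (by positivity : 0 ≤ 2 * x)
  have hsin_ge := sinTaylor_alternating 5 hx0.le
  have hsin_le := sinTaylor_alternating 4 hx0.le
  have hcos_le := cosTaylor_alternating 4 hx0.le
  norm_num [sinTaylor, cosTaylor, Finset.sum_range_succ, Nat.factorial]
    at hsin2x hsin_ge hsin_le hcos_le
  have hcos_term := mul_le_mul_of_nonneg_left hcos_le (by positivity : (0 : ℝ) ≤ 3 * x)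
  have hsin_term := mul_le_mul_of_nonneg_left hsin_le (by positivity : (0 : ℝ) ≤ 3 / 20 * x ^ 4)
  have hpoly : 0 < x ^ 7 / 280 + x ^ 9 / 11200 - 41 * x ^ 11 / 1900800 - x ^ 13 / 2419200 := by
    have hx2 : x ^ 2 ≤ 4 := by nlinarith
    have hx4 : x ^ 4 ≤ 16 := by nlinarith
    have hx6 : x ^ 6 ≤ 64 := by nlinarith
    have hfactor : 0 < 1 / 280 + x ^ 2 / 11200 - 41 * x ^ 4 / 1900800 - x ^ 6 / 2419200 := by
      nlinarith
    have := mul_pos (pow_pos hx0 7) hfactor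
    linarith
  rw [huygensDefect]
  linarith

lemma huygensDefect_neg_of_le {c x : ℝ} (hc : 13 / 80 ≤ c) (hx0 : 0 < x) (hx : x ≤ 7 / 5) :
    huygensDefect c x < 0 := by
  have hsin2x := sinTaylor_alternating 4 (by positivity : 0 ≤ 2 * x)
  have hsin_le := sinTaylor_alternating 4 hx0.le
  have hsin_ge := sinTaylor_alternating 3 hx0.le
  have hcos_ge := cosTaylor_alternating 3 hx0.le
  norm_num [sinTaylor, cosTaylor, Finset.sum_range_succ, Nat.factorial]
    at hsin2x hsin_le hsin_ge hcos_ge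
  have hsin_pos : 0 < sin x := sin_pos_of_pos_of_lt_pi hx0 (by linarith [pi_gt_three])
  have hcos_term := mul_le_mul_of_nonneg_left hcos_ge (by positivity : (0 : ℝ) ≤ 3 * x)
  have hsin_term :=
    mul_le_mul_of_nonneg_left hsin_ge (by positivity : (0 : ℝ) ≤ 13 / 80 * x ^ 4)
  have hc_term := mul_le_mul_of_nonneg_right hc (by positivity : 0 ≤ x ^ 4 * sin x)
  have hpoly : -x ^ 5 / 80 + 19 * x ^ 7 / 3360 + x ^ 9 / 16800 + 13 * x ^ 11 / 403200 < 0 := by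
    have hx2 : x ^ 2 ≤ 49 / 25 := by nlinarith
    have hx4 : x ^ 4 ≤ (49 / 25) ^ 2 := by nlinarith
    have hx6 : x ^ 6 ≤ (49 / 25) ^ 3 := by nlinarith
    have hfactor : -1 / 80 + 19 * x ^ 2 / 3360 + x ^ 4 / 16800 + 13 * x ^ 6 / 403200 < 0 := by
      linarith
    have := mul_neg_of_pos_of_neg (pow_pos hx0 5) hfactor
    linarith
  rw [huygensDefect]
  linarith

lemma mul_sin_lt_cos_of_lt_pi_div_two {x : ℝ} (hx0 : 0 < x) (hx : x < π / 2) :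
    (π / 2 - x) * sin x < cos x := by
  have hcos : 0 < cos (π / 2 - x) := cos_pos_of_mem_Ioo ⟨by linarith, by linarith⟩
  have htan := lt_tan (x := π / 2 - x) (by linarith) (by linarith)
  rw [tan_eq_sin_div_cos, lt_div_iff₀ hcos, cos_pi_div_two_sub, sin_pi_div_two_sub] at htan
  exact htan

lemma huygensDefect_neg_of_gt {x : ℝ} (hx : 7 / 5 < x) (hxπ : x < π / 2) :
    huygensDefect ((2 / π) ^ 4) x < 0 := by
  have hc : (2 / π) ^ 4 < 823 / 5000 := by
    have hπ4 := pow_lt_pow_left₀ pi_gt_d2 (by norm_num) (n := 4) (by norm_num)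
    rw [div_pow, div_lt_iff₀ (by positivity)]
    linarith
  have hπ : π / 2 < 63 / 40 := by linarith [pi_lt_d2]
  set c := (2 / π) ^ 4
  set P := (π / 2 + x) * ((π / 2) ^ 2 + x ^ 2)
  have hcos : 0 < cos x := cos_pos_of_mem_Ioo ⟨by linarith [pi_pos], hxπ⟩
  have hP : c * P < 3 * x - 2 := by
    have hP' : P < (63 / 40 + x) * ((63 / 40) ^ 2 + x ^ 2) := by
      have := pi_pos
      apply _root_.mul_lt_mul'' <;> nlinarith
    have hx' : 0 ≤ (x - 7 / 5) * (63 / 40 - x) := mul_nonneg (by linarith) (by linarith)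
    calc c * P < 823 / 5000 * ((63 / 40 + x) * ((63 / 40) ^ 2 + x ^ 2)) := by gcongr
      _ < 3 * x - 2 := by nlinarith [mul_nonneg hx' (by linarith : (0 : ℝ) ≤ x)]
  have hfactor : 1 - c * x ^ 4 = c * (π / 2 - x) * P := by
    simp only [c, P]
    field_simp
    ring
  calc huygensDefect c x = c * P * ((π / 2 - x) * sin x) - (3 * x - 2 * sin x) * cos x := by
        rw [huygensDefect, sin_two_mul]
        linear_combination sin x * hfactor
    _ < c * P * cos x - (3 * x - 2) * cos x := by
        have hleft := mul_lt_mul_of_pos_left (mul_sin_lt_cos_of_lt_pi_div_two (by linarith) hxπ)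
          (by positivity : 0 < c * P)
        have hright : (3 * x - 2) * cos x ≤ (3 * x - 2 * sin x) * cos x :=
          mul_le_mul_of_nonneg_right (by linarith [sin_le_one x]) hcos.le
        linarith
    _ = (c * P - (3 * x - 2)) * cos x := by ring
    _ < 0 := mul_neg_of_neg_of_pos (by linarith) hcos

lemma huygensDefect_two_div_pi_neg {x : ℝ} (hx0 : 0 < x) (hx : x < π / 2) :
    huygensDefect ((2 / π) ^ 4) x < 0 := by
  rcases le_or_gt x (7 / 5) with hle | hgt
  · have hπ4 := pow_lt_pow_left₀ pi_lt_d2 pi_pos.le (n := 4) (by norm_num)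
    refine huygensDefect_neg_of_le ?_ hx0 hle
    rw [div_pow, le_div_iff₀ (by positivity)]
    linarith
  · exact huygensDefect_neg_of_gt hgt hx

theorem stmt_10 (x : ℝ) (h1 : 0 < x) (h2 : x < π / 2) :
    3 + (3 / 20) * x ^ 3 * tan x < 2 * (sin x / x) + tan x / x ∧
      2 * (sin x / x) + tan x / x < 3 + (2 / π) ^ 4 * x ^ 3 * tan x := by
  have hcos : 0 < cos x := cos_pos_of_mem_Ioo ⟨by linarith, h2⟩
  have hxcos : 0 < x * cos x := mul_pos h1 hcos
  have hsub (c : ℝ) := huygens_sub_eq_huygensDefect_div c h1.ne' hcos.ne'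
  constructor
  · have := div_pos (huygensDefect_pos h1 (by linarith [pi_le_four])) hxcos
    linarith [hsub (3 / 20)]
  · have := div_neg_of_neg_of_pos (huygensDefect_two_div_pi_neg h1 h2) hxcos
    linarith [hsub ((2 / π) ^ 4)]
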